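/- Let u, v ∈ ℝᵈ be fixed unit vectors and P the orthogonal projection onto a uniformly random n-dimensional subspace of ℝᵈ (with 1 < n < d, d > 1). Then E[(uᵀ P v)²] = (n / (d(d+2))) [ (uᵀv)² (n+2) + (1 − (uᵀv)²)(d−n)/(d−1) ]. -/

import Mathlib

open MeasureTheory ProbabilityTheory

namespace RandProj

variable {Ω : Type*} [MeasurableSpace Ω] {μ : Measure Ω} {d : ℕ}
  {P : Ω → Fin d → Fin d → ℝ}

lemma meas_entry (hmeas : Measurable P) (i j : Fin d) :
    Measurable fun ω => P ω i j :=
  (measurable_pi_apply j).comp ((measurable_pi_apply i).comp hmeas)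

lemma bound_ae (hsymm : ∀ᵐ ω ∂μ, ∀ i j, P ω i j = P ω j i)
    (hidem : ∀ᵐ ω ∂μ, ∀ i j, ∑ k, P ω i k * P ω k j = P ω i j) :
    ∀ᵐ ω ∂μ, ∀ i j, |P ω i j| ≤ 1 := by
  filter_upwards [hsymm, hidem] with ω hs hi
  intro i j
  have hdiag : ∀ i, P ω i i = ∑ k, (P ω i k) ^ 2 := by
    intro i
    rw [← hi i i]
    refine Finset.sum_congr rfl fun k _ => ?_
    rw [hs i k]; ring
  have h1 : ∀ i j, (P ω i j) ^ 2 ≤ P ω i i := by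
    intro i j
    rw [hdiag i]
    exact Finset.single_le_sum (f := fun k => (P ω i k) ^ 2)
      (fun k _ => sq_nonneg _) (Finset.mem_univ j)
  have h0 : 0 ≤ P ω i i := by
    rw [hdiag i]; exact Finset.sum_nonneg fun k _ => sq_nonneg _
  have h2 : P ω i i ≤ 1 := by nlinarith [h1 i i]
  nlinarith [h1 i j, abs_nonneg (P ω i j), sq_abs (P ω i j)]

lemma integrable_mul [IsProbabilityMeasure μ] (hmeas : Measurable P)
    (hb : ∀ᵐ ω ∂μ, ∀ i j, |P ω i j| ≤ 1) (i j k l : Fin d) :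
    Integrable (fun ω => P ω i j * P ω k l) μ := by
  refine Integrable.mono' (integrable_const (1 : ℝ))
    ((meas_entry hmeas i j).mul (meas_entry hmeas k l)).aestronglyMeasurable ?_
  filter_upwards [hb] with ω h
  rw [norm_mul]
  calc ‖P ω i j‖ * ‖P ω k l‖ ≤ 1 * 1 := by
        exact mul_le_mul (h i j) (h k l) (norm_nonneg _) zero_le_one
    _ = 1 := by ring

lemma conj_integral [IsProbabilityMeasure μ] (hmeas : Measurable P)
    (hinv : ∀ O : Matrix (Fin d) (Fin d) ℝ, O ∈ Matrix.orthogonalGroup (Fin d) ℝ →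
      Measure.map (fun ω => fun i j => ∑ a, ∑ b, O i a * P ω a b * O j b) μ =
        Measure.map P μ)
    (O : Matrix (Fin d) (Fin d) ℝ) (hO : O ∈ Matrix.orthogonalGroup (Fin d) ℝ)
    {g : (Fin d → Fin d → ℝ) → ℝ} (hg : Measurable g) :
    ∫ ω, g (fun i j => ∑ a, ∑ b, O i a * P ω a b * O j b) ∂μ = ∫ ω, g (P ω) ∂μ := by
  have hconj : Measurable (fun ω => fun i j : Fin d => ∑ a, ∑ b, O i a * P ω a b * O j b) := by
    refine measurable_pi_lambda _ fun i => measurable_pi_lambda _ fun j => ?_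
    refine Finset.measurable_sum _ fun a _ => Finset.measurable_sum _ fun b _ => ?_
    exact ((meas_entry hmeas a b).const_mul _).mul_const _
  rw [← integral_map hconj.aemeasurable hg.stronglyMeasurable.aestronglyMeasurable,
    hinv O hO, integral_map hmeas.aemeasurable hg.stronglyMeasurable.aestronglyMeasurable]

/-- sign vector flipping coordinate `r` -/
def eps (r t : Fin d) : ℝ := if t = r then -1 else 1

lemma eps_sq (r t : Fin d) : eps r t * eps r t = 1 := by
  unfold eps; split <;> norm_num

lemma flip_zero [IsProbabilityMeasure μ] (hmeas : Measurable P)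
    (hinv : ∀ O : Matrix (Fin d) (Fin d) ℝ, O ∈ Matrix.orthogonalGroup (Fin d) ℝ →
      Measure.map (fun ω => fun i j => ∑ a, ∑ b, O i a * P ω a b * O j b) μ =
        Measure.map P μ)
    (r i j k l : Fin d) (hsign : eps r i * eps r j * (eps r k * eps r l) = -1) :
    ∫ ω, P ω i j * P ω k l ∂μ = 0 := by
  set O : Matrix (Fin d) (Fin d) ℝ := Matrix.diagonal (eps r) with hOdef
  have hO : O ∈ Matrix.orthogonalGroup (Fin d) ℝ := by
    rw [Matrix.mem_orthogonalGroup_iff]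
    ext a b
    simp [hOdef, Matrix.mul_apply, Matrix.star_apply, Matrix.diagonal_apply,
      Matrix.one_apply, Finset.sum_ite_eq', eps]
    split <;> simp_all <;> split <;> simp_all
  have hg : Measurable fun M : Fin d → Fin d → ℝ => M i j * M k l :=
    by fun_prop
  have key := conj_integral hmeas hinv O hO hg
  have hQ : ∀ ω (s t : Fin d), (∑ a, ∑ b, O s a * P ω a b * O t b) = eps r s * eps r t * P ω s t := by
    intro ω s t
    simp [hOdef, Matrix.diagonal_apply, ite_mul, zero_mul, mul_ite, mul_zero,
      Finset.sum_ite_eq, Finset.sum_ite_eq']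
    ring
  simp only [hQ] at key
  have heq : (fun ω => eps r i * eps r j * P ω i j * (eps r k * eps r l * P ω k l))
      = fun ω => -(P ω i j * P ω k l) := by
    funext ω
    linear_combination (P ω i j * P ω k l) * hsign
  rw [heq, integral_neg] at key
  linarith

lemma perm_eq [IsProbabilityMeasure μ] (hmeas : Measurable P)
    (hinv : ∀ O : Matrix (Fin d) (Fin d) ℝ, O ∈ Matrix.orthogonalGroup (Fin d) ℝ →
      Measure.map (fun ω => fun i j => ∑ a, ∑ b, O i a * P ω a b * O j b) μ =
        Measure.map P μ)
    (σ : Equiv.Perm (Fin d)) (i j k l : Fin d) :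
    ∫ ω, P ω (σ i) (σ j) * P ω (σ k) (σ l) ∂μ = ∫ ω, P ω i j * P ω k l ∂μ := by
  set O : Matrix (Fin d) (Fin d) ℝ := Matrix.of (fun s a => if a = σ.symm s then 1 else 0)
    with hOdef
  have hO : O ∈ Matrix.orthogonalGroup (Fin d) ℝ := by
    rw [Matrix.mem_orthogonalGroup_iff]
    ext a b
    simp [hOdef, Matrix.mul_apply, Matrix.star_apply, Matrix.one_apply, ite_mul, zero_mul,
      Finset.sum_ite_eq', EmbeddingLike.apply_eq_iff_eq, eq_comm]
  have hg : Measurable fun M : Fin d → Fin d → ℝ => M (σ i) (σ j) * M (σ k) (σ l) :=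
    by fun_prop
  have key := conj_integral hmeas hinv O hO hg
  have hQ : ∀ ω (s t : Fin d), (∑ a, ∑ b, O s a * P ω a b * O t b)
      = P ω (σ.symm s) (σ.symm t) := by
    intro ω s t
    simp [hOdef, ite_mul, zero_mul, mul_ite, mul_zero, Finset.sum_ite_eq, Finset.sum_ite_eq']
  simp only [hQ, Equiv.symm_apply_apply] at key
  exact key.symm


lemma reduce [IsProbabilityMeasure μ] [NeZero d] (hmeas : Measurable P)
    (hb1 : ∀ᵐ ω ∂μ, ∀ i j, |P ω i j| ≤ 1)
    (hinv : ∀ O : Matrix (Fin d) (Fin d) ℝ, O ∈ Matrix.orthogonalGroup (Fin d) ℝ →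
      Measure.map (fun ω => fun i j => ∑ a, ∑ b, O i a * P ω a b * O j b) μ =
        Measure.map P μ)
    (h01 : (0 : Fin d) ≠ 1)
    (u v : Fin d → ℝ) (hu : ∑ i, u i ^ 2 = 1) (hv : ∑ i, v i ^ 2 = 1) :
    ∫ ω, (∑ i, ∑ j, u i * P ω i j * v j) ^ 2 ∂μ =
      (∑ i, u i * v i) ^ 2 * ∫ ω, P ω 0 0 * P ω 0 0 ∂μ +
        (1 - (∑ i, u i * v i) ^ 2) * ∫ ω, P ω 0 1 * P ω 0 1 ∂μ := by
  obtain ⟨b, hb0⟩ : ∃ b : OrthonormalBasis (Fin d) ℝ (EuclideanSpace ℝ (Fin d)),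
      ∀ a, b 0 a = u a := by
    set u' : EuclideanSpace ℝ (Fin d) := (WithLp.equiv 2 _).symm u with hu'def
    have hnorm : ‖u'‖ = 1 := by
      rw [EuclideanSpace.norm_eq]
      have : ∀ i, u' i = u i := fun i => rfl
      simp only [this, Real.norm_eq_abs, sq_abs]
      rw [hu, Real.sqrt_one]
    have horth : Orthonormal ℝ (Set.restrict {(0 : Fin d)} (fun _ => u')) := by
      constructor
      · intro i; exact hnorm
      · intro i j hij
        exact absurd (Subtype.ext (i.2.trans j.2.symm)) hij
    obtain ⟨b, hb⟩ := horth.exists_orthonormalBasis_extension_of_card_eq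
      (by simp [finrank_euclideanSpace_fin])
    exact ⟨b, fun a => by rw [hb 0 rfl]; rfl⟩
  set O : Matrix (Fin d) (Fin d) ℝ := Matrix.of fun s a => b s a with hOdef
  have hO : O ∈ Matrix.orthogonalGroup (Fin d) ℝ := by
    rw [Matrix.mem_orthogonalGroup_iff]
    ext s t
    have h := orthonormal_iff_ite.mp b.orthonormal s t
    rw [PiLp.inner_apply] at h
    simp only [RCLike.inner_apply, starRingEnd_apply, star_trivial] at h
    simpa [hOdef, Matrix.mul_apply, Matrix.star_apply, Matrix.one_apply, mul_comm] using h
  have hcol : ∀ s t, (∑ j, b j s * b j t) = if s = t then (1:ℝ) else 0 := by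
    intro s t
    have h2 := (Matrix.mem_orthogonalGroup_iff' (Fin d) ℝ).mp hO
    have h3 := congrFun (congrFun h2 s) t
    simpa [hOdef, Matrix.mul_apply, Matrix.star_apply, Matrix.one_apply] using h3
  set w : Fin d → ℝ := fun j => ∑ t, b j t * v t with hwdef
  have hvexp : ∀ t, (∑ j, w j * b j t) = v t := by
    intro t
    calc ∑ j, w j * b j t = ∑ j, ∑ s, (b j s * b j t) * v s := by
          refine Finset.sum_congr rfl fun j _ => ?_
          simp only [hwdef, Finset.sum_mul]
          exact Finset.sum_congr rfl fun s _ => by ring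
      _ = ∑ s, (∑ j, b j s * b j t) * v s := by
          rw [Finset.sum_comm]
          exact Finset.sum_congr rfl fun s _ => (Finset.sum_mul _ _ _).symm
      _ = v t := by
          simp [hcol, ite_mul, Finset.sum_ite_eq]
  have hw0 : w 0 = ∑ i, u i * v i := by
    simp only [hwdef]
    exact Finset.sum_congr rfl fun t _ => by rw [hb0 t]
  have hpars : ∑ j, w j * w j = 1 := by
    calc ∑ j, w j * w j = ∑ j, ∑ t, (w j * b j t) * v t := by
          refine Finset.sum_congr rfl fun j _ => ?_
          conv_lhs => rw [hwdef]
          simp only [Finset.mul_sum]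
          exact Finset.sum_congr rfl fun t _ => by ring
      _ = ∑ t, (∑ j, w j * b j t) * v t := by
          rw [Finset.sum_comm]
          exact Finset.sum_congr rfl fun t _ => (Finset.sum_mul _ _ _).symm
      _ = 1 := by
          simp only [hvexp]
          rw [← hv]
          exact Finset.sum_congr rfl fun t _ => (sq (v t)).symm ▸ by ring
  have hg : Measurable fun M : Fin d → Fin d → ℝ => (∑ j, w j * M 0 j) ^ 2 := by
    apply Measurable.pow_const
    refine Finset.measurable_sum _ fun j _ => ?_
    have hMj : Measurable fun M : Fin d → Fin d → ℝ => M 0 j :=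
      (measurable_pi_apply j).comp (measurable_pi_apply 0)
    exact hMj.const_mul _
  have key := conj_integral hmeas hinv O hO hg
  have hpt : ∀ ω, (∑ j, w j * (∑ a, ∑ c, O 0 a * P ω a c * O j c))
      = ∑ i, ∑ j, u i * P ω i j * v j := by
    intro ω
    calc ∑ j, w j * (∑ a, ∑ c, O 0 a * P ω a c * O j c)
        = ∑ j, ∑ a, ∑ c, u a * P ω a c * b j c * w j := by
          refine Finset.sum_congr rfl fun j _ => ?_
          rw [Finset.mul_sum]
          refine Finset.sum_congr rfl fun a _ => ?_
          rw [Finset.mul_sum]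
          refine Finset.sum_congr rfl fun c _ => ?_
          simp only [hOdef, Matrix.of_apply, hb0]
          ring
      _ = ∑ a, ∑ c, ∑ j, u a * P ω a c * b j c * w j := by
          rw [Finset.sum_comm]
          exact Finset.sum_congr rfl fun a _ => Finset.sum_comm
      _ = ∑ i, ∑ j, u i * P ω i j * v j := by
          refine Finset.sum_congr rfl fun a _ => Finset.sum_congr rfl fun c _ => ?_
          rw [← hvexp c, Finset.mul_sum]
          refine Finset.sum_congr rfl fun j _ => by ring
  have key2 : ∫ ω, (∑ i, ∑ j, u i * P ω i j * v j) ^ 2 ∂μ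
      = ∫ ω, (∑ j, w j * P ω 0 j) ^ 2 ∂μ := by
    rw [← key]
    refine integral_congr_ae (Filter.Eventually.of_forall fun ω => ?_)
    show (∑ i, ∑ j, u i * P ω i j * v j) ^ 2
      = (∑ j, w j * (∑ a, ∑ c, O 0 a * P ω a c * O j c)) ^ 2
    rw [hpt ω]
  rw [key2]
  have hptw : ∀ ω : Ω, (∑ j, w j * P ω 0 j) ^ 2
      = ∑ j, ∑ k, (w j * w k) * (P ω 0 j * P ω 0 k) := by
    intro ω
    rw [sq, Finset.sum_mul_sum]
    exact Finset.sum_congr rfl fun j _ => Finset.sum_congr rfl fun k _ => by ring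
  have hexp : ∫ ω, (∑ j, w j * P ω 0 j) ^ 2 ∂μ
      = ∑ j, ∑ k, (w j * w k) * ∫ ω, P ω 0 j * P ω 0 k ∂μ := by
    simp only [hptw]
    rw [integral_finset_sum _ (fun j _ => integrable_finset_sum _
      (fun k _ => (integrable_mul hmeas hb1 0 j 0 k).const_mul _))]
    refine Finset.sum_congr rfl fun j _ => ?_
    rw [integral_finset_sum _ (fun k _ => (integrable_mul hmeas hb1 0 j 0 k).const_mul _)]
    exact Finset.sum_congr rfl fun k _ => integral_const_mul _ _
  rw [hexp]
  set m1 := ∫ ω, P ω 0 0 * P ω 0 0 ∂μ with hm1def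
  set m2 := ∫ ω, P ω 0 1 * P ω 0 1 ∂μ with hm2def
  have hval : ∀ j k : Fin d, ∫ ω, P ω 0 j * P ω 0 k ∂μ =
      if j = k then (if j = 0 then m1 else m2) else 0 := by
    intro j k
    by_cases hjk : j = k
    · subst hjk
      rw [if_pos rfl]
      by_cases hj0 : j = 0
      · subst hj0; rw [if_pos rfl]
      · rw [if_neg hj0]
        have hσ := perm_eq hmeas hinv (Equiv.swap 1 j) 0 1 0 1
        have h1 : Equiv.swap 1 j 0 = 0 :=
          Equiv.swap_apply_of_ne_of_ne h01 (Ne.symm hj0)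
        have h2 : Equiv.swap 1 j 1 = j := Equiv.swap_apply_left 1 j
        rw [h1, h2] at hσ
        exact hσ
    · rw [if_neg hjk]
      by_cases hj0 : j = 0
      · subst hj0
        refine flip_zero hmeas hinv k 0 0 0 k ?_
        simp only [eps, if_neg hjk, if_pos rfl]
        norm_num
      · refine flip_zero hmeas hinv j 0 j 0 k ?_
        have hkj : k ≠ j := fun h => hjk h.symm
        simp only [eps, if_neg (Ne.symm hj0), if_pos rfl, if_neg hkj]
        norm_num
  calc ∑ j, ∑ k, (w j * w k) * ∫ ω, P ω 0 j * P ω 0 k ∂μ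
      = ∑ j, w j * w j * (if j = 0 then m1 else m2) := by
        refine Finset.sum_congr rfl fun j _ => ?_
        calc ∑ k, (w j * w k) * ∫ ω, P ω 0 j * P ω 0 k ∂μ
            = ∑ k, (w j * w k) * (if j = k then (if j = 0 then m1 else m2) else 0) :=
              Finset.sum_congr rfl fun k _ => by rw [hval j k]
          _ = w j * w j * (if j = 0 then m1 else m2) := by
              simp [mul_ite, mul_zero, Finset.sum_ite_eq]
    _ = ∑ j, (w j * w j * m2 + (if j = 0 then w j * w j * (m1 - m2) else 0)) := by
        refine Finset.sum_congr rfl fun j _ => ?_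
        by_cases hj : j = 0 <;> simp [hj] <;> ring
    _ = (∑ j, w j * w j) * m2 + w 0 * w 0 * (m1 - m2) := by
        rw [Finset.sum_add_distrib, Finset.sum_ite_eq' Finset.univ (0 : Fin d)
          (fun j => w j * w j * (m1 - m2)), if_pos (Finset.mem_univ _), ← Finset.sum_mul]
    _ = (∑ i, u i * v i) ^ 2 * m1 + (1 - (∑ i, u i * v i) ^ 2) * m2 := by
        rw [hpars, hw0]; ring

end RandProj

/-- For fixed unit vectors `u, v ∈ ℝᵈ` and `P` the orthogonal projection onto a uniformly
random `n`-dimensional subspace (a random symmetric idempotent matrix of trace `n` whose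
law is invariant under conjugation by fixed orthogonal matrices),
`E[(uᵀ P v)²] = (n/(d(d+2))) [ (uᵀv)² (n+2) + (1 − (uᵀv)²)(d−n)/(d−1) ]`. -/
theorem random_projection_bilinear_moment {Ω : Type*} [MeasurableSpace Ω] (μ : Measure Ω)
    [IsProbabilityMeasure μ] (d n : ℕ) (hd : 2 ≤ d) (hn1 : 1 < n) (hnd : n < d)
    (u v : Fin d → ℝ) (hu : ∑ i, u i ^ 2 = 1) (hv : ∑ i, v i ^ 2 = 1)
    (P : Ω → Fin d → Fin d → ℝ) (hmeas : Measurable P)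
    (hsymm : ∀ᵐ ω ∂μ, ∀ i j, P ω i j = P ω j i)
    (hidem : ∀ᵐ ω ∂μ, ∀ i j, ∑ k, P ω i k * P ω k j = P ω i j)
    (htrace : ∀ᵐ ω ∂μ, ∑ i, P ω i i = (n : ℝ))
    (hinv : ∀ O : Matrix (Fin d) (Fin d) ℝ, O ∈ Matrix.orthogonalGroup (Fin d) ℝ →
      Measure.map (fun ω => fun i j => ∑ a, ∑ b, O i a * P ω a b * O j b) μ =
        Measure.map P μ) :
    ∫ ω, (∑ i, ∑ j, u i * P ω i j * v j) ^ 2 ∂μ =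
      (n : ℝ) / (d * (d + 2)) *
        ((∑ i, u i * v i) ^ 2 * (n + 2) +
          (1 - (∑ i, u i * v i) ^ 2) * ((d : ℝ) - n) / ((d : ℝ) - 1)) := by
  haveI : NeZero d := ⟨by omega⟩
  have h01 : (0 : Fin d) ≠ 1 := by
    simp only [Fin.ne_iff_vne, Fin.val_zero]
    rw [Fin.val_one', Nat.mod_eq_of_lt (by omega)]
    omega
  have hb1 := RandProj.bound_ae hsymm hidem
  have hint : ∀ i j k l : Fin d, Integrable (fun ω => P ω i j * P ω k l) μ :=
    RandProj.integrable_mul hmeas hb1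
  -- permutations sending (0,1) to an arbitrary pair
  have pairσ : ∀ i j : Fin d, i ≠ j → ∃ σ : Equiv.Perm (Fin d), σ 0 = i ∧ σ 1 = j := by
    intro i j hij
    have hτ0 : Equiv.swap 0 i 0 = i := Equiv.swap_apply_left 0 i
    have hτj : Equiv.swap 0 i j ≠ 0 := by
      intro h
      have h2 := congrArg (Equiv.swap 0 i) h
      rw [Equiv.swap_apply_self, hτ0] at h2
      exact hij h2.symm
    refine ⟨(Equiv.swap 1 (Equiv.swap 0 i j)).trans (Equiv.swap 0 i), ?_, ?_⟩
    · show Equiv.swap 0 i (Equiv.swap 1 (Equiv.swap 0 i j) 0) = i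
      rw [Equiv.swap_apply_of_ne_of_ne h01 (Ne.symm hτj), hτ0]
    · show Equiv.swap 0 i (Equiv.swap 1 (Equiv.swap 0 i j) 1) = j
      rw [Equiv.swap_apply_left, Equiv.swap_apply_self]
  have Em1 : ∀ i : Fin d, ∫ ω, P ω i i * P ω i i ∂μ = ∫ ω, P ω 0 0 * P ω 0 0 ∂μ := by
    intro i
    have h := RandProj.perm_eq hmeas hinv (Equiv.swap 0 i) 0 0 0 0
    rwa [Equiv.swap_apply_left] at h
  have Em2 : ∀ i j : Fin d, i ≠ j →
      ∫ ω, P ω i j * P ω i j ∂μ = ∫ ω, P ω 0 1 * P ω 0 1 ∂μ := by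
    intro i j hij
    obtain ⟨σ, h0, h1⟩ := pairσ i j hij
    have h := RandProj.perm_eq hmeas hinv σ 0 1 0 1
    rwa [h0, h1] at h
  have Em3 : ∀ i j : Fin d, i ≠ j →
      ∫ ω, P ω i i * P ω j j ∂μ = ∫ ω, P ω 0 0 * P ω 1 1 ∂μ := by
    intro i j hij
    obtain ⟨σ, h0, h1⟩ := pairσ i j hij
    have h := RandProj.perm_eq hmeas hinv σ 0 0 1 1
    rwa [h0, h1] at h
  -- generic double-sum evaluation
  have hdsum : ∀ c1 c2 : ℝ, (∑ i : Fin d, ∑ k : Fin d, if i = k then c1 else c2)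
      = d * c1 + d * ((d:ℝ) - 1) * c2 := by
    intro c1 c2
    have hrow : ∀ i : Fin d, (∑ k : Fin d, if i = k then c1 else c2)
        = c1 + ((d:ℝ) - 1) * c2 := by
      intro i
      calc (∑ k : Fin d, if i = k then c1 else c2)
          = ∑ k : Fin d, (c2 + if i = k then c1 - c2 else 0) := by
            refine Finset.sum_congr rfl fun k _ => ?_
            by_cases h : i = k
            · rw [if_pos h, if_pos h]; ring
            · rw [if_neg h, if_neg h]; ring
        _ = c1 + ((d:ℝ) - 1) * c2 := by
            rw [Finset.sum_add_distrib, Finset.sum_const, Finset.sum_ite_eq,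
              if_pos (Finset.mem_univ _), Finset.card_univ, Fintype.card_fin, nsmul_eq_mul]
            ring
    rw [Finset.sum_congr rfl fun i _ => hrow i, Finset.sum_const, Finset.card_univ,
      Fintype.card_fin, nsmul_eq_mul]
    ring
  -- equation B : d*m1 + d*(d-1)*m2 = n
  have eqB : (d:ℝ) * (∫ ω, P ω 0 0 * P ω 0 0 ∂μ)
      + (d:ℝ) * ((d:ℝ) - 1) * (∫ ω, P ω 0 1 * P ω 0 1 ∂μ) = n := by
    have hae : ∀ᵐ ω ∂μ, (∑ i : Fin d, ∑ k : Fin d, P ω i k * P ω k i) = (n:ℝ) := by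
      filter_upwards [hidem, htrace] with ω h1 h2
      calc (∑ i : Fin d, ∑ k : Fin d, P ω i k * P ω k i)
          = ∑ i : Fin d, P ω i i := Finset.sum_congr rfl fun i _ => h1 i i
        _ = n := h2
    have h1 : ∫ ω, (∑ i : Fin d, ∑ k : Fin d, P ω i k * P ω k i) ∂μ = n := by
      rw [integral_congr_ae hae, integral_const]
      simp
    have h2 : ∫ ω, (∑ i : Fin d, ∑ k : Fin d, P ω i k * P ω k i) ∂μ
        = ∑ i : Fin d, ∑ k : Fin d, ∫ ω, P ω i k * P ω k i ∂μ := by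
      rw [integral_finset_sum _ fun i _ => integrable_finset_sum _ fun k _ => hint i k k i]
      exact Finset.sum_congr rfl fun i _ => integral_finset_sum _ fun k _ => hint i k k i
    have h3 : ∀ i k : Fin d, ∫ ω, P ω i k * P ω k i ∂μ
        = if i = k then (∫ ω, P ω 0 0 * P ω 0 0 ∂μ) else (∫ ω, P ω 0 1 * P ω 0 1 ∂μ) := by
      intro i k
      by_cases h : i = k
      · subst h; rw [if_pos rfl]; exact Em1 i
      · rw [if_neg h]
        have hsy : ∫ ω, P ω i k * P ω k i ∂μ = ∫ ω, P ω i k * P ω i k ∂μ := by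
          refine integral_congr_ae ?_
          filter_upwards [hsymm] with ω hs
          rw [hs k i]
        rw [hsy]
        exact Em2 i k h
    rw [← hdsum]
    rw [← h1, h2]
    exact Finset.sum_congr rfl fun i _ => Finset.sum_congr rfl fun k _ => (h3 i k).symm
  -- equation C : d*m1 + d*(d-1)*m3 = n^2
  have eqC : (d:ℝ) * (∫ ω, P ω 0 0 * P ω 0 0 ∂μ)
      + (d:ℝ) * ((d:ℝ) - 1) * (∫ ω, P ω 0 0 * P ω 1 1 ∂μ) = (n:ℝ) * n := by
    have hae : ∀ᵐ ω ∂μ, (∑ i : Fin d, ∑ k : Fin d, P ω i i * P ω k k) = (n:ℝ) * n := by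
      filter_upwards [htrace] with ω h2
      calc (∑ i : Fin d, ∑ k : Fin d, P ω i i * P ω k k)
          = (∑ i : Fin d, P ω i i) * (∑ k : Fin d, P ω k k) := by
            rw [Finset.sum_mul_sum]
        _ = (n:ℝ) * n := by rw [h2]
    have h1 : ∫ ω, (∑ i : Fin d, ∑ k : Fin d, P ω i i * P ω k k) ∂μ = (n:ℝ) * n := by
      rw [integral_congr_ae hae, integral_const]
      simp
    have h2 : ∫ ω, (∑ i : Fin d, ∑ k : Fin d, P ω i i * P ω k k) ∂μ
        = ∑ i : Fin d, ∑ k : Fin d, ∫ ω, P ω i i * P ω k k ∂μ := by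
      rw [integral_finset_sum _ fun i _ => integrable_finset_sum _ fun k _ => hint i i k k]
      exact Finset.sum_congr rfl fun i _ => integral_finset_sum _ fun k _ => hint i i k k
    have h3 : ∀ i k : Fin d, ∫ ω, P ω i i * P ω k k ∂μ
        = if i = k then (∫ ω, P ω 0 0 * P ω 0 0 ∂μ) else (∫ ω, P ω 0 0 * P ω 1 1 ∂μ) := by
      intro i k
      by_cases h : i = k
      · subst h; rw [if_pos rfl]; exact Em1 i
      · rw [if_neg h]; exact Em3 i k h
    rw [← hdsum, ← h1, h2]
    exact Finset.sum_congr rfl fun i _ => Finset.sum_congr rfl fun k _ => (h3 i k).symm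
  -- rotation relation via `reduce` applied to (e0+e1)/sqrt 2
  have hc0 : (Real.sqrt 2 / 2) * (Real.sqrt 2 / 2) = 1/2 := by
    rw [div_mul_div_comm, Real.mul_self_sqrt (by norm_num)]
    norm_num
  set c0 : ℝ := Real.sqrt 2 / 2 with hc0def
  set ustar : Fin d → ℝ := fun t => (if t = 0 then c0 else 0) + (if t = 1 then c0 else 0)
    with hustar
  have hrow : ∀ f : Fin d → ℝ, (∑ j, f j * ustar j) = f 0 * c0 + f 1 * c0 := by
    intro f
    calc (∑ j, f j * ustar j)
        = ∑ j, ((if j = 0 then f j * c0 else 0) + (if j = 1 then f j * c0 else 0)) := by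
          refine Finset.sum_congr rfl fun j _ => ?_
          simp only [hustar]
          by_cases hj0 : j = 0
          · by_cases hj1 : j = 1
            · rw [if_pos hj0, if_pos hj1, if_pos hj0, if_pos hj1]; ring
            · rw [if_pos hj0, if_neg hj1, if_pos hj0, if_neg hj1]; ring
          · by_cases hj1 : j = 1
            · rw [if_neg hj0, if_pos hj1, if_neg hj0, if_pos hj1]; ring
            · rw [if_neg hj0, if_neg hj1, if_neg hj0, if_neg hj1]; ring
      _ = f 0 * c0 + f 1 * c0 := by
          rw [Finset.sum_add_distrib,
            Finset.sum_ite_eq' Finset.univ (0 : Fin d) (fun j => f j * c0),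
            Finset.sum_ite_eq' Finset.univ (1 : Fin d) (fun j => f j * c0),
            if_pos (Finset.mem_univ _), if_pos (Finset.mem_univ _)]
  have hust0 : ustar 0 = c0 := by
    show (if (0:Fin d) = 0 then c0 else 0) + (if (0:Fin d) = 1 then c0 else 0) = c0
    rw [if_pos rfl, if_neg h01]; ring
  have hust1 : ustar 1 = c0 := by
    show (if (1:Fin d) = 0 then c0 else 0) + (if (1:Fin d) = 1 then c0 else 0) = c0
    rw [if_neg (Ne.symm h01), if_pos rfl]; ring
  have hdot : ∑ i, ustar i * ustar i = 1 := by
    rw [hrow ustar, hust0, hust1]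
    linarith [hc0]
  have hsum_u : ∑ i, ustar i ^ 2 = 1 := by
    rw [← hdot]
    exact Finset.sum_congr rfl fun i _ => pow_two (ustar i)
  have hquad : ∀ ω : Ω, (∑ i, ∑ j, ustar i * P ω i j * ustar j)
      = (P ω 0 0 * c0 + P ω 0 1 * c0) * c0 + (P ω 1 0 * c0 + P ω 1 1 * c0) * c0 := by
    intro ω
    calc (∑ i, ∑ j, ustar i * P ω i j * ustar j)
        = ∑ i, (ustar i * P ω i 0 * c0 + ustar i * P ω i 1 * c0) :=
          Finset.sum_congr rfl fun i _ => hrow (fun j => ustar i * P ω i j)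
      _ = ∑ i, (P ω i 0 * c0 + P ω i 1 * c0) * ustar i :=
          Finset.sum_congr rfl fun i _ => by ring
      _ = (P ω 0 0 * c0 + P ω 0 1 * c0) * c0 + (P ω 1 0 * c0 + P ω 1 1 * c0) * c0 :=
          hrow (fun i => P ω i 0 * c0 + P ω i 1 * c0)
  have hae2 : ∀ᵐ ω ∂μ, (∑ i, ∑ j, ustar i * P ω i j * ustar j) ^ 2
      = (1/4) * ((P ω 0 0 * P ω 0 0) + (P ω 1 1 * P ω 1 1) + 4*(P ω 0 1 * P ω 0 1)
        + 2*(P ω 0 0 * P ω 1 1) + 4*(P ω 0 0 * P ω 0 1) + 4*(P ω 1 1 * P ω 0 1)) := by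
    filter_upwards [hsymm] with ω hs
    rw [hquad ω, hs 1 0]
    linear_combination ((c0*c0 + 1/2) * (P ω 0 0 + 2*(P ω 0 1) + P ω 1 1)^2) * hc0
  have hflip1 : ∫ ω, P ω 0 0 * P ω 0 1 ∂μ = 0 := by
    refine RandProj.flip_zero hmeas hinv 1 0 0 0 1 ?_
    simp only [RandProj.eps, if_neg h01, if_pos rfl]
    norm_num
  have hflip2 : ∫ ω, P ω 1 1 * P ω 0 1 ∂μ = 0 := by
    refine RandProj.flip_zero hmeas hinv 1 1 1 0 1 ?_
    simp only [RandProj.eps, if_neg h01, if_pos rfl]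
    norm_num
  have hsplit : ∫ ω, (∑ i, ∑ j, ustar i * P ω i j * ustar j) ^ 2 ∂μ
      = (1/4) * ((∫ ω, P ω 0 0 * P ω 0 0 ∂μ) + (∫ ω, P ω 1 1 * P ω 1 1 ∂μ)
        + 4*(∫ ω, P ω 0 1 * P ω 0 1 ∂μ) + 2*(∫ ω, P ω 0 0 * P ω 1 1 ∂μ)
        + 4*(∫ ω, P ω 0 0 * P ω 0 1 ∂μ) + 4*(∫ ω, P ω 1 1 * P ω 0 1 ∂μ)) := by
    rw [integral_congr_ae hae2, integral_const_mul]
    congr 1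
    have i1 := hint 0 0 0 0
    have i2 := hint 1 1 1 1
    have i3 : Integrable (fun ω => 4*(P ω 0 1 * P ω 0 1)) μ := (hint 0 1 0 1).const_mul (4:ℝ)
    have i4 : Integrable (fun ω => 2*(P ω 0 0 * P ω 1 1)) μ := (hint 0 0 1 1).const_mul (2:ℝ)
    have i5 : Integrable (fun ω => 4*(P ω 0 0 * P ω 0 1)) μ := (hint 0 0 0 1).const_mul (4:ℝ)
    have i6 : Integrable (fun ω => 4*(P ω 1 1 * P ω 0 1)) μ := (hint 1 1 0 1).const_mul (4:ℝ)
    have i12 : Integrable (fun ω => P ω 0 0 * P ω 0 0 + P ω 1 1 * P ω 1 1) μ := i1.add i2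
    have i13 : Integrable (fun ω => P ω 0 0 * P ω 0 0 + P ω 1 1 * P ω 1 1
      + 4*(P ω 0 1 * P ω 0 1)) μ := i12.add i3
    have i14 : Integrable (fun ω => P ω 0 0 * P ω 0 0 + P ω 1 1 * P ω 1 1
      + 4*(P ω 0 1 * P ω 0 1) + 2*(P ω 0 0 * P ω 1 1)) μ := i13.add i4
    have i15 : Integrable (fun ω => P ω 0 0 * P ω 0 0 + P ω 1 1 * P ω 1 1
      + 4*(P ω 0 1 * P ω 0 1) + 2*(P ω 0 0 * P ω 1 1) + 4*(P ω 0 0 * P ω 0 1)) μ := i14.add i5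
    rw [integral_add i15 i6, integral_add i14 i5, integral_add i13 i4,
      integral_add i12 i3, integral_add i1 i2,
      integral_const_mul, integral_const_mul, integral_const_mul, integral_const_mul]
  have hred := RandProj.reduce hmeas hb1 hinv h01 ustar ustar hsum_u hsum_u
  rw [hdot] at hred
  have eqA : (∫ ω, P ω 0 0 * P ω 0 0 ∂μ)
      = (∫ ω, P ω 0 0 * P ω 1 1 ∂μ) + 2 * (∫ ω, P ω 0 1 * P ω 0 1 ∂μ) := by
    have h := hsplit.symm.trans hred
    rw [hflip1, hflip2, Em1 1] at h
    linarith [h]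
  -- final assembly
  have hred2 := RandProj.reduce hmeas hb1 hinv h01 u v hu hv
  rw [hred2]
  have hD2 : (2:ℝ) ≤ (d:ℝ) := by exact_mod_cast hd
  have hD0 : (d:ℝ) ≠ 0 := by linarith
  have hD1 : (d:ℝ) - 1 ≠ 0 := by linarith
  have hDp2 : (d:ℝ) + 2 ≠ 0 := by linarith
  set m1 := ∫ ω, P ω 0 0 * P ω 0 0 ∂μ
  set m2 := ∫ ω, P ω 0 1 * P ω 0 1 ∂μ
  set m3 := ∫ ω, P ω 0 0 * P ω 1 1 ∂μ
  set c := ∑ i, u i * v i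
  have hm1 : (d:ℝ) * ((d:ℝ)+2) * m1 = n * (n+2) := by
    linear_combination eqC + 2*eqB + ((d:ℝ)*((d:ℝ)-1))*eqA
  have hm2 : ((d:ℝ) * ((d:ℝ)-1) * ((d:ℝ)+2)) * m2 = n * ((d:ℝ) - n) := by
    linear_combination ((d:ℝ)+2)*eqB - hm1
  have hm1' : m1 = ((n:ℝ)*((n:ℝ)+2))/((d:ℝ)*((d:ℝ)+2)) := by
    field_simp
    linear_combination hm1
  have hm2' : m2 = ((n:ℝ)*((d:ℝ)-(n:ℝ)))/((d:ℝ)*((d:ℝ)-1)*((d:ℝ)+2)) := by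
    field_simp
    linear_combination hm2
  rw [hm1', hm2']
  field_simp
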